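/- arXiv:1411.6253 — 6 statements merged into one kernel-verified Lean document; each statement's English description precedes it below -/
import Mathlib

section
/- Let k ≥ 1 and work in the free group F_{k+1} := FreeGroup (Fin (k+1)) with free generators e_1, …, e_{k+1}. Define elements b_1, …, b_k of F_{k+1} recursively by b_1 = e_1 e_2² and b_{i+1} = b_i e_{i+1} e_{i+2}² for 1 ≤ i < k. Then the family (b_1, …, b_k, e_{k+1}) is a free basis of F_{k+1}; equivalently, the endomorphism of FreeGroup (Fin (k+1)) determined by e_i ↦ b_i for 1 ≤ i ≤ k and e_{k+1} ↦ e_{k+1} is an automorphism. -/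
/-!
Write `x ↦ b(x)` for the passage from a sequence `x_0, …, x_k` in an arbitrary group to
`b_0, …, b_{k-1}, x_k` (indices shifted down by one from the statement). It commutes with group
homomorphisms and has an explicit inverse `y ↦ w`: reading `b_i = b_{i-1} x_i x_{i+1}²` backwards
gives `w_k = y_k` and `w_i = y_{i-1}⁻¹ y_i w_{i+1}⁻²` (with `y_{-1} = 1`), a recursion downwards
from `k`. Applied to the generators, the two transformations define mutually inverse endomorphisms
of the free group.
-/

open FreeGroup

namespace FreeGroup

variable {ι G : Type*} [Group G]

theorem lift_bijective_of_lift_inverse {f g : ι → FreeGroup ι}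
    (hfg : ∀ i, lift f (g i) = of i) (hgf : ∀ i, lift g (f i) = of i) :
    Function.Bijective (lift f) := by
  have hfg' : (lift f).comp (lift g) = MonoidHom.id _ := by ext i; simp [hfg]
  have hgf' : (lift g).comp (lift f) = MonoidHom.id _ := by ext i; simp [hgf]
  exact Function.bijective_iff_has_inverse.mpr
    ⟨lift g, DFunLike.congr_fun hgf', DFunLike.congr_fun hfg'⟩

/-- Padding by `1` makes `lift f ∘ genSeq n` again a sequence padded by `1`. -/
def genSeq (n i : ℕ) : FreeGroup (Fin n) :=
  if h : i < n then of ⟨i, h⟩ else 1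

theorem genSeq_of_lt {n i : ℕ} (h : i < n) : genSeq n i = of ⟨i, h⟩ :=
  dif_pos h

theorem genSeq_of_le {n i : ℕ} (h : n ≤ i) : genSeq n i = 1 :=
  dif_neg (by omega)

theorem genSeq_val {n : ℕ} (j : Fin n) : genSeq n j = of j :=
  genSeq_of_lt j.isLt

theorem lift_comp_genSeq {n : ℕ} {f : Fin n → G} {y : ℕ → G} (hf : ∀ j : Fin n, f j = y j)
    (hy : ∀ i, n ≤ i → y i = 1) : lift f ∘ genSeq n = y := by
  ext i
  by_cases h : i < n
  · simp [genSeq_of_lt h, hf]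
  · simp [genSeq_of_le (not_lt.mp h), hy i (not_lt.mp h)]

end FreeGroup

namespace BSequence

variable {G H : Type*} [Group G] [Group H]

def bSeq (x : ℕ → G) : ℕ → G
  | 0 => x 0 * x 1 ^ 2
  | i + 1 => bSeq x i * x (i + 1) * x (i + 2) ^ 2

def bFamily (k : ℕ) (x : ℕ → G) (i : ℕ) : G :=
  if i < k then bSeq x i else x i

def quotPrev (y : ℕ → G) : ℕ → G
  | 0 => y 0
  | i + 1 => (y i)⁻¹ * y (i + 1)

def bFamilyInv (k : ℕ) (y : ℕ → G) (i : ℕ) : G :=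
  if i < k then quotPrev y i * (bFamilyInv k y (i + 1) ^ 2)⁻¹ else y i
termination_by k - i

theorem map_bSeq (f : G →* H) (x : ℕ → G) (i : ℕ) : f (bSeq x i) = bSeq (f ∘ x) i := by
  induction i with
  | zero => simp [bSeq]
  | succ i ih => simp [bSeq, ih]

theorem map_bFamily (f : G →* H) (k : ℕ) (x : ℕ → G) (i : ℕ) :
    f (bFamily k x i) = bFamily k (f ∘ x) i := by
  unfold bFamily
  split_ifs <;> simp [map_bSeq]

theorem map_quotPrev (f : G →* H) (y : ℕ → G) (i : ℕ) :
    f (quotPrev y i) = quotPrev (f ∘ y) i := by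
  cases i <;> simp [quotPrev]

theorem map_bFamilyInv (f : G →* H) (k : ℕ) (y : ℕ → G) (i : ℕ) :
    f (bFamilyInv k y i) = bFamilyInv k (f ∘ y) i := by
  rw [bFamilyInv.eq_1 k y, bFamilyInv.eq_1 k (f ∘ y)]
  split_ifs
  · simp [map_quotPrev, map_bFamilyInv f k y (i + 1)]
  · rfl
termination_by k - i

theorem quotPrev_bFamily {k : ℕ} (x : ℕ → G) {i : ℕ} (hi : i < k) :
    quotPrev (bFamily k x) i = x i * x (i + 1) ^ 2 := by
  cases i with
  | zero => simp [quotPrev, bFamily, hi, bSeq]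
  | succ i => simp [quotPrev, bFamily, hi, show i < k by omega, bSeq, mul_assoc]

theorem bFamilyInv_bFamily (k : ℕ) (x : ℕ → G) (i : ℕ) :
    bFamilyInv k (bFamily k x) i = x i := by
  rw [bFamilyInv]
  split_ifs with hi
  · rw [bFamilyInv_bFamily k x (i + 1), quotPrev_bFamily x hi]
    group
  · simp [bFamily, hi]
termination_by k - i

theorem bSeq_bFamilyInv {k : ℕ} (y : ℕ → G) {i : ℕ} (hi : i < k) :
    bSeq (bFamilyInv k y) i = y i := by
  induction i with
  | zero =>
    rw [bSeq, bFamilyInv.eq_1 k y 0, if_pos hi]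
    simp [quotPrev]
  | succ i ih =>
    rw [bSeq, ih (by omega), bFamilyInv.eq_1 k y (i + 1), if_pos hi, quotPrev]
    group

theorem bFamily_bFamilyInv (k : ℕ) (y : ℕ → G) (i : ℕ) :
    bFamily k (bFamilyInv k y) i = y i := by
  unfold bFamily
  split_ifs with hi
  · exact bSeq_bFamilyInv y hi
  · rw [bFamilyInv, if_neg hi]

end BSequence

open BSequence in
/-- In `F_{k+1}` with basis `e_1, …, e_{k+1}` (0-indexed here as `e_0, …, e_k`), the
recursively defined elements `b_1 = e_1 e_2²`, `b_{i+1} = b_i e_{i+1} e_{i+2}²` together with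
`e_{k+1}` form a free basis: the endomorphism sending `e_i ↦ b_i` (`1 ≤ i ≤ k`) and
`e_{k+1} ↦ e_{k+1}` is an automorphism. -/
theorem b_sequence_is_basis (k : ℕ) (hk : 1 ≤ k)
    (b : Fin k → FreeGroup (Fin (k + 1)))
    (hb0 : b ⟨0, by omega⟩ =
      FreeGroup.of (⟨0, by omega⟩ : Fin (k + 1)) *
        FreeGroup.of (⟨1, by omega⟩ : Fin (k + 1)) ^ 2)
    (hbs : ∀ (i : ℕ) (h : i + 1 < k),
      b ⟨i + 1, h⟩ = b ⟨i, by omega⟩ *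
        FreeGroup.of (⟨i + 1, by omega⟩ : Fin (k + 1)) *
        FreeGroup.of (⟨i + 2, by omega⟩ : Fin (k + 1)) ^ 2) :
    Function.Bijective
      (FreeGroup.lift (fun i : Fin (k + 1) =>
        if h : (i : ℕ) < k then b ⟨i, h⟩ else FreeGroup.of i)) := by
  set e := genSeq (k + 1) with he
  have hb : ∀ i (h : i < k), b ⟨i, h⟩ = bSeq e i := by
    intro i
    induction i with
    | zero =>
      intro h
      rw [hb0, bSeq, he, genSeq_of_lt (by omega), genSeq_of_lt (by omega)]
    | succ i ih =>
      intro h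
      rw [hbs i h, ih, bSeq, he, genSeq_of_lt (by omega), genSeq_of_lt (by omega)]
  set f := fun i : Fin (k + 1) => if h : (i : ℕ) < k then b ⟨i, h⟩ else FreeGroup.of i
  set g := fun j : Fin (k + 1) => bFamilyInv k e j
  have hf : ∀ j : Fin (k + 1), f j = bFamily k e j := by
    intro j
    by_cases h : (j : ℕ) < k
    · simp [f, bFamily, h, hb]
    · simp [f, bFamily, h, he, genSeq_val]
  have hfe : lift f ∘ e = bFamily k e :=
    lift_comp_genSeq hf fun i hi => by simp [bFamily, show ¬i < k by omega, he, genSeq_of_le hi]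
  have hge : lift g ∘ e = bFamilyInv k e :=
    lift_comp_genSeq (fun j => rfl) fun i hi => by
      rw [bFamilyInv.eq_1, if_neg (by omega), he, genSeq_of_le hi]
  refine lift_bijective_of_lift_inverse (g := g) (fun j => ?_) (fun j => ?_)
  · rw [map_bFamilyInv, hfe, bFamilyInv_bFamily, he, genSeq_val]
  · rw [hf, map_bFamily, hge, bFamily_bFamilyInv, he, genSeq_val]
end

section
/- Work in the free group F_ω := FreeGroup ℕ with free generators e_1, e_2, e_3, …, and let b_1 = e_1 e_2², b_{i+1} = b_i e_{i+1} e_{i+2}². Then for every k ≥ 1 and every injective map σ : Fin k → {1, 2, 3, …} there exists an automorphism α of FreeGroup ℕ such that α(b_i) = b_{σ(i)} for all 1 ≤ i ≤ k. (This is the group-theoretic content of the assertion that the sequence (b_i) is an indiscernible set of realizations of the generic type.) -/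
namespace BSeq

open FreeGroup

/-- `pre 0 = 1`, `pre (m+1) = e_m`. -/
def pre : ℕ → FreeGroup ℕ
  | 0 => 1
  | (m + 1) => FreeGroup.of m

/-- forward map of the elementary automorphism `U j`. -/
def ffun (j : ℕ) : ℕ → FreeGroup ℕ := fun n =>
  if n = j then pre j * FreeGroup.of j * FreeGroup.of (j + 1) ^ 2 else FreeGroup.of n

/-- inverse map of the elementary automorphism `U j`. -/
def gfun (j : ℕ) : ℕ → FreeGroup ℕ := fun n =>
  if n = j then (pre j)⁻¹ * FreeGroup.of j * (FreeGroup.of (j + 1) ^ 2)⁻¹ else FreeGroup.of n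

lemma ffun_ne (j n : ℕ) (h : n ≠ j) : ffun j n = FreeGroup.of n := by simp [ffun, h]

lemma gfun_ne (j n : ℕ) (h : n ≠ j) : gfun j n = FreeGroup.of n := by simp [gfun, h]

lemma lift_ffun_pre (j : ℕ) : FreeGroup.lift (ffun j) (pre j) = pre j := by
  cases j with
  | zero => simp [pre]
  | succ m => simp [pre, ffun_ne (m + 1) m (by omega)]

lemma lift_gfun_pre (j : ℕ) : FreeGroup.lift (gfun j) (pre j) = pre j := by
  cases j with
  | zero => simp [pre]
  | succ m => simp [pre, gfun_ne (m + 1) m (by omega)]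

lemma gf_id (j : ℕ) :
    (FreeGroup.lift (gfun j)).comp (FreeGroup.lift (ffun j)) = MonoidHom.id _ := by
  apply FreeGroup.ext_hom
  intro n
  simp only [MonoidHom.comp_apply, MonoidHom.id_apply, FreeGroup.lift_apply_of]
  by_cases h : n = j
  · subst h
    have hf : ffun n n = pre n * FreeGroup.of n * FreeGroup.of (n + 1) ^ 2 := if_pos rfl
    have hg : gfun n n = (pre n)⁻¹ * FreeGroup.of n * (FreeGroup.of (n + 1) ^ 2)⁻¹ := if_pos rfl
    rw [hf, _root_.map_mul, _root_.map_mul, _root_.map_pow, FreeGroup.lift_apply_of,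
      FreeGroup.lift_apply_of, lift_gfun_pre, hg, gfun_ne n (n + 1) (by omega)]
    group
  · rw [ffun_ne j n h, FreeGroup.lift_apply_of, gfun_ne j n h]

lemma fg_id (j : ℕ) :
    (FreeGroup.lift (ffun j)).comp (FreeGroup.lift (gfun j)) = MonoidHom.id _ := by
  apply FreeGroup.ext_hom
  intro n
  simp only [MonoidHom.comp_apply, MonoidHom.id_apply, FreeGroup.lift_apply_of]
  by_cases h : n = j
  · subst h
    have hf : ffun n n = pre n * FreeGroup.of n * FreeGroup.of (n + 1) ^ 2 := if_pos rfl
    have hg : gfun n n = (pre n)⁻¹ * FreeGroup.of n * (FreeGroup.of (n + 1) ^ 2)⁻¹ := if_pos rfl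
    rw [hg, _root_.map_mul, _root_.map_mul, _root_.map_inv, _root_.map_inv, _root_.map_pow,
      FreeGroup.lift_apply_of, FreeGroup.lift_apply_of, lift_ffun_pre, hf, ffun_ne n (n + 1) (by omega)]
    group
  · rw [gfun_ne j n h, FreeGroup.lift_apply_of, ffun_ne j n h]

/-- The elementary automorphism `e_j ↦ pre j * e_j * e_{j+1}²`. -/
def U (j : ℕ) : FreeGroup ℕ ≃* FreeGroup ℕ :=
  MonoidHom.toMulEquiv (FreeGroup.lift (ffun j)) (FreeGroup.lift (gfun j)) (gf_id j) (fg_id j)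

lemma U_of (j n : ℕ) : U j (FreeGroup.of n) = ffun j n := by
  simp [U, MonoidHom.toMulEquiv]

/-- `Phi n = U 0 ∘ U 1 ∘ ⋯ ∘ U n`. -/
def Phi : ℕ → (FreeGroup ℕ ≃* FreeGroup ℕ)
  | 0 => U 0
  | (n + 1) => (U (n + 1)).trans (Phi n)

lemma Phi_of_gt : ∀ n m : ℕ, n < m → Phi n (FreeGroup.of m) = FreeGroup.of m := by
  intro n
  induction n with
  | zero => intro m hm; rw [Phi, U_of, ffun_ne 0 m (by omega)]
  | succ p ih =>
    intro m hm
    show Phi p (U (p + 1) (FreeGroup.of m)) = _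
    rw [U_of, ffun_ne (p + 1) m (by omega), ih m (by omega)]

lemma Phi_of_le (b : ℕ → FreeGroup ℕ)
    (hb0 : b 0 = FreeGroup.of 0 * FreeGroup.of 1 ^ 2)
    (hbs : ∀ i : ℕ, b (i + 1) = b i * FreeGroup.of (i + 1) * FreeGroup.of (i + 2) ^ 2) :
    ∀ M n : ℕ, n ≤ M → Phi M (FreeGroup.of n) = b n := by
  intro M
  induction M with
  | zero =>
    intro n hn
    interval_cases n
    rw [Phi, U_of, ffun, if_pos rfl, hb0, pre, one_mul]
  | succ p ih =>
    intro n hn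
    show Phi p (U (p + 1) (FreeGroup.of n)) = b n
    rcases Nat.lt_or_ge n (p + 1) with h | h
    · rw [U_of, ffun_ne (p + 1) n (by omega), ih n (by omega)]
    · have hn' : n = p + 1 := by omega
      subst hn'
      rw [U_of, ffun, if_pos rfl, pre]
      rw [_root_.map_mul, _root_.map_mul, _root_.map_pow, ih p le_rfl,
        Phi_of_gt p (p + 1) (by omega), Phi_of_gt p (p + 2) (by omega), hbs p]

end BSeq

/-- The recursively defined sequence `b_1 = e_1 e_2²`, `b_{i+1} = b_i e_{i+1} e_{i+2}²`
(0-indexed here) is an indiscernible set: for every `k ≥ 1` and every injective map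
`σ : Fin k → ℕ` there is an automorphism of `F_ω = FreeGroup ℕ` with `α (b i) = b (σ i)`
for all `i`. -/
theorem b_sequence_indiscernible (b : ℕ → FreeGroup ℕ)
    (hb0 : b 0 = FreeGroup.of 0 * FreeGroup.of 1 ^ 2)
    (hbs : ∀ i : ℕ, b (i + 1) = b i * FreeGroup.of (i + 1) * FreeGroup.of (i + 2) ^ 2)
    (k : ℕ) (hk : 1 ≤ k) (σ : Fin k → ℕ) (hσ : Function.Injective σ) :
    ∃ α : FreeGroup ℕ ≃* FreeGroup ℕ, ∀ i : Fin k, α (b i) = b (σ i) := by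
  classical
  -- Step 1: extend σ to a permutation π of ℕ.
  set s : Set ℕ := Set.Iio k with hs
  set t : Set ℕ := Set.range σ with ht
  have hbij : Function.Bijective (fun x : s => (⟨σ ⟨x.1, x.2⟩, Set.mem_range_self _⟩ : t)) := by
    constructor
    · rintro ⟨x, hx⟩ ⟨y, hy⟩ hxy
      have : σ ⟨x, hx⟩ = σ ⟨y, hy⟩ := congrArg Subtype.val hxy
      have := hσ this
      simpa [Subtype.ext_iff] using congrArg Fin.val this
    · rintro ⟨y, ⟨i, rfl⟩⟩
      exact ⟨⟨i.1, i.2⟩, by simp⟩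
  set e₀ : s ≃ t := Equiv.ofBijective _ hbij with he₀
  have hsfin : s.Finite := Set.finite_Iio k
  have htfin : t.Finite := Set.finite_range σ
  have h1 : Infinite (sᶜ : Set ℕ) := (hsfin.infinite_compl).to_subtype
  have h2 : Infinite (tᶜ : Set ℕ) := (htfin.infinite_compl).to_subtype
  obtain ⟨d1⟩ := nonempty_denumerable (sᶜ : Set ℕ)
  obtain ⟨d2⟩ := nonempty_denumerable (tᶜ : Set ℕ)
  set e₁ : (sᶜ : Set ℕ) ≃ (tᶜ : Set ℕ) := (@Denumerable.eqv _ d1).trans (@Denumerable.eqv _ d2).symm with he₁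
  obtain ⟨π, hπ⟩ := ((Equiv.Set.compl e₀).symm e₁)
  have hπ' : ∀ i : Fin k, π i.1 = σ i := by
    intro i
    have hi : (i : ℕ) ∈ s := i.2
    have := hπ ⟨i.1, hi⟩
    simpa [he₀, Fin.eta] using this
  -- Step 2: the automorphism Φ M with Φ M (e_n) = b n for n ≤ M.
  set M : ℕ := k + Finset.univ.sup (fun i : Fin k => σ i) with hM
  have hPhi : ∀ n : ℕ, n ≤ M → BSeq.Phi M (FreeGroup.of n) = b n :=
    fun n hn => BSeq.Phi_of_le b hb0 hbs M n hn
  refine ⟨(BSeq.Phi M).symm.trans ((FreeGroup.freeGroupCongr π).trans (BSeq.Phi M)), ?_⟩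
  intro i
  have hiM : (i : ℕ) ≤ M := by
    have : (i : ℕ) < k := i.2
    omega
  have hσiM : σ i ≤ M := by
    have : σ i ≤ Finset.univ.sup (fun i : Fin k => σ i) :=
      Finset.le_sup (Finset.mem_univ i)
    omega
  have h3 : (BSeq.Phi M).symm (b i) = FreeGroup.of (i : ℕ) := by
    rw [MulEquiv.symm_apply_eq, hPhi i hiM]
  calc ((BSeq.Phi M).symm.trans ((FreeGroup.freeGroupCongr π).trans (BSeq.Phi M))) (b i)
      = BSeq.Phi M (FreeGroup.freeGroupCongr π ((BSeq.Phi M).symm (b i))) := rfl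
    _ = BSeq.Phi M (FreeGroup.of (π i)) := by rw [h3]; simp
    _ = b (σ i) := by rw [hπ' i, hPhi (σ i) hσiM]
end

section
/- Let F and B be groups and let G := F * B * FreeGroup Unit be their free product with the free group on one generator x. For elements y, c_1, …, c_j of a group, define γ_j(y; c_1, …, c_j) recursively by γ_1(y; c_1) = c_1 y⁻² and γ_{j+1}(y; c_1, …, c_{j+1}) = γ_j(c_j⁻¹ c_{j+1} y⁻²; c_1, …, c_j). Fix i ≥ 1 and elements b_1, …, b_{i-1} of the subgroup F * B of G (the image of the canonical map from the first two factors). Then for every element ỹ of G, the element γ_i(ỹ; b_1, …, b_{i-1}, x) does not belong to the subgroup F * B of G. -/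
open Monoid Monoid.Coprod

/-- `gamma j y c` is the recursively defined word `γ_{j+1}(y; c_0, …, c_j)` (0-indexed:
`γ` on `j+1` parameters), given by `γ_1(y; c_1) = c_1 y⁻²` and
`γ_{j+1}(y; c_1, …, c_{j+1}) = γ_j(c_j⁻¹ c_{j+1} y⁻²; c_1, …, c_j)`. -/
def gamma {H : Type*} [Group H] : (j : ℕ) → H → (Fin (j + 1) → H) → H
  | 0, y, c => c 0 * y⁻¹ ^ 2
  | j + 1, y, c =>
      gamma j ((c ⟨j, by omega⟩)⁻¹ * c ⟨j + 1, by omega⟩ * y⁻¹ ^ 2)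
        (fun t => c t.castSucc)

theorem map_gamma {H K : Type*} [Group H] [Group K] (ψ : H →* K) :
    ∀ (j : ℕ) (y : H) (c : Fin (j + 1) → H),
      ψ (gamma j y c) = gamma j (ψ y) (fun t => ψ (c t))
  | 0, y, c => by simp [gamma]
  | j + 1, y, c => by simp [gamma, map_gamma ψ j]

theorem gamma_ones : ∀ (j : ℕ) (y : Multiplicative ℤ) (c : Fin (j + 1) → Multiplicative ℤ),
    (∀ t, c t = 1) →
      Multiplicative.toAdd (gamma j y c) = (-2) ^ (j + 1) * Multiplicative.toAdd y
  | 0, y, c, hc => by simp [gamma, hc]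
  | j + 1, y, c, hc => by
      rw [gamma, gamma_ones j _ _ (fun t => hc _), hc, hc]
      simp [pow_succ]
      ring


/-- Claim I: in `G = F ∗ B ∗ F(x)`, for any `i ≥ 1` (here `γ` has `i + 1` parameters),
parameters `b_1, …, b_i` lying in the subgroup `F ∗ B` of `G`, and any element `ỹ` of `G`,
the element `γ_{i+1}(ỹ; b_1, …, b_i, x)` does not lie in the subgroup `F ∗ B`. -/
theorem gamma_not_in_base (F B : Type*) [Group F] [Group B]
    (i : ℕ) (b : Fin i → (F ∗ B) ∗ FreeGroup Unit)
    (hb : ∀ t : Fin i,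
      b t ∈ (Coprod.inl : F ∗ B →* (F ∗ B) ∗ FreeGroup Unit).range)
    (ytilde : (F ∗ B) ∗ FreeGroup Unit) :
    gamma i ytilde (Fin.snoc b (Coprod.inr (FreeGroup.of ()))) ∉
      (Coprod.inl : F ∗ B →* (F ∗ B) ∗ FreeGroup Unit).range := by
  set φ : (F ∗ B) ∗ FreeGroup Unit →* Multiplicative ℤ :=
    Coprod.lift 1 (FreeGroup.lift fun _ => Multiplicative.ofAdd (1 : ℤ)) with hφ
  have hφinl : ∀ g : F ∗ B, φ (Coprod.inl g) = 1 := by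
    intro g; rw [hφ, Coprod.lift_apply_inl]; rfl
  have hφb : ∀ t : Fin i, φ (b t) = 1 := by
    intro t
    obtain ⟨g, hg⟩ := hb t
    rw [← hg, hφinl]
  have hφx : φ (Coprod.inr (FreeGroup.of ())) = Multiplicative.ofAdd (1 : ℤ) := by
    rw [hφ, Coprod.lift_apply_inr, FreeGroup.lift_apply_of]
  rintro ⟨g, hg⟩
  have h1 : φ (gamma i ytilde (Fin.snoc b (Coprod.inr (FreeGroup.of ())))) = 1 := by
    rw [← hg, hφinl]
  rw [map_gamma] at h1
  have h1' := congrArg Multiplicative.toAdd h1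
  set a : ℤ := Multiplicative.toAdd (φ ytilde) with ha
  cases i with
  | zero =>
      rw [gamma] at h1'
      simp only [Fin.snoc, Fin.val_zero] at h1'
      norm_num [hφx] at h1'
      omega
  | succ k =>
      rw [gamma] at h1'
      rw [gamma_ones] at h1'
      · have e1 : (Fin.snoc b (Coprod.inr (FreeGroup.of ())) : Fin (k + 2) → _)
            ⟨k, by omega⟩ = b ⟨k, by omega⟩ := by
          have h : (⟨k, by omega⟩ : Fin (k + 2)) = Fin.castSucc ⟨k, by omega⟩ := rfl
          rw [h, Fin.snoc_castSucc]
        have e2 : (Fin.snoc b (Coprod.inr (FreeGroup.of ())) : Fin (k + 2) → _)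
            ⟨k + 1, by omega⟩ = Coprod.inr (FreeGroup.of ()) := by
          have h : (⟨k + 1, by omega⟩ : Fin (k + 2)) = Fin.last (k + 1) := rfl
          rw [h, Fin.snoc_last]
        rw [e1, e2, hφb, hφx] at h1'
        simp at h1'
        omega
      · intro t
        rw [Fin.snoc_castSucc]
        exact hφb t
end

section
/- Let F and B be groups and let G := F * B * FreeGroup Unit be their free product with the free group on one generator x. Let h : G → FreeGroup Unit be the homomorphism which kills F and B and sends x to x. For elements y, c_1, …, c_j of a group, define γ_j(y; c_1, …, c_j) recursively by γ_1(y; c_1) = c_1 y⁻² and γ_{j+1}(y; c_1, …, c_{j+1}) = γ_j(c_j⁻¹ c_{j+1} y⁻²; c_1, …, c_j). Fix i ≥ 1, elements b_1, …, b_{i-1} of the subgroup F * B of G, and an element ỹ of G, and let p ∈ ℤ be the integer with h(ỹ) = x^p. Then h(γ_i(ỹ; b_1, …, b_{i-1}, x)) = x^{(1-2p)·(-2)^{i-1}}; in particular this image is not the identity. -/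
open Monoid Monoid.Coprod

lemma gamma_map {H K : Type*} [Group H] [Group K] (f : H →* K) :
    ∀ (j : ℕ) (y : H) (c : Fin (j + 1) → H),
      f (gamma j y c) = gamma j (f y) (f ∘ c)
  | 0, y, c => by simp [gamma, Function.comp]
  | j + 1, y, c => by
      simp only [gamma]
      rw [gamma_map f j]
      simp [Function.comp_def]

lemma gamma_ones_s9 {H : Type*} [Group H] :
    ∀ (j : ℕ) (y : H), gamma j y (fun _ => 1) = y ^ ((-2 : ℤ) ^ (j + 1))
  | 0, y => by
      simp only [gamma]
      rw [one_mul, ← zpow_natCast, inv_zpow, ← zpow_neg]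
      norm_num
  | j + 1, y => by
      simp only [gamma]
      rw [gamma_ones_s9 j]
      rw [inv_one, one_mul, one_mul, ← zpow_natCast, inv_zpow, ← zpow_neg, ← zpow_mul]
      ring_nf

lemma xpow_aux {H : Type*} [Group H] (x : H) (p : ℤ) :
    x * (x ^ p)⁻¹ ^ 2 = x ^ (1 - 2 * p) := by
  rw [← zpow_natCast ((x ^ p)⁻¹), inv_zpow, ← zpow_neg, ← zpow_mul]
  nth_rewrite 1 [← zpow_one x]
  rw [← zpow_add]
  congr 1
  push_cast
  ring

/-- Under the homomorphism `h : F ∗ B ∗ F(x) → F(x)` killing `F` and `B` and fixing `x`, if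
`h(ỹ) = x^p` then (with `γ` on `i + 1` parameters, i.e. `γ_{i+1}` for `i + 1 ≥ 1`)
`h(γ_{i+1}(ỹ; b_1, …, b_i, x)) = x^{(1-2p)·(-2)^i}`; in particular it is not the identity. -/
theorem gamma_image_in_free_on_x (F B : Type*) [Group F] [Group B]
    (i : ℕ) (b : Fin i → (F ∗ B) ∗ FreeGroup Unit)
    (hb : ∀ t : Fin i,
      b t ∈ (Coprod.inl : F ∗ B →* (F ∗ B) ∗ FreeGroup Unit).range)
    (ytilde : (F ∗ B) ∗ FreeGroup Unit) (p : ℤ)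
    (hp : Coprod.lift (1 : F ∗ B →* FreeGroup Unit) (MonoidHom.id (FreeGroup Unit)) ytilde =
      FreeGroup.of () ^ p) :
    Coprod.lift (1 : F ∗ B →* FreeGroup Unit) (MonoidHom.id (FreeGroup Unit))
        (gamma i ytilde (Fin.snoc b (Coprod.inr (FreeGroup.of ())))) =
      FreeGroup.of () ^ ((1 - 2 * p) * (-2) ^ i) ∧
    Coprod.lift (1 : F ∗ B →* FreeGroup Unit) (MonoidHom.id (FreeGroup Unit))
        (gamma i ytilde (Fin.snoc b (Coprod.inr (FreeGroup.of ())))) ≠ 1 := by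
  set x : FreeGroup Unit := FreeGroup.of () with hx
  set h : (F ∗ B) ∗ FreeGroup Unit →* FreeGroup Unit :=
    Coprod.lift (1 : F ∗ B →* FreeGroup Unit) (MonoidHom.id (FreeGroup Unit)) with hh
  have hcomp : (⇑h) ∘ (Fin.snoc b (Coprod.inr x) : Fin (i + 1) → _) =
      Fin.snoc (fun _ => (1 : FreeGroup Unit)) x := by
    rw [Fin.comp_snoc]
    have hb1 : (⇑h) ∘ b = fun _ => (1 : FreeGroup Unit) := by
      funext t
      obtain ⟨g, hg⟩ := hb t
      simp [hh, ← hg]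
    have hb2 : h (Coprod.inr x) = x := by simp [hh]
    rw [hb1, hb2]
  have key : h (gamma i ytilde (Fin.snoc b (Coprod.inr x))) =
      x ^ ((1 - 2 * p) * (-2) ^ i) := by
    rw [gamma_map, hcomp, hp]
    cases i with
    | zero =>
        simp only [gamma, pow_zero, mul_one]
        have : (Fin.snoc (fun _ => (1 : FreeGroup Unit)) x : Fin 1 → _) 0 = x := by
          simp [Fin.snoc]
        rw [this, xpow_aux]
    | succ j =>
        have h1 : (Fin.snoc (fun _ => (1 : FreeGroup Unit)) x : Fin (j + 2) → _)
            ⟨j, by omega⟩ = 1 := by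
          have : (⟨j, by omega⟩ : Fin (j + 2)) = Fin.castSucc ⟨j, by omega⟩ := rfl
          rw [this, Fin.snoc_castSucc]
        have h2 : (Fin.snoc (fun _ => (1 : FreeGroup Unit)) x : Fin (j + 2) → _)
            ⟨j + 1, by omega⟩ = x := by
          have : (⟨j + 1, by omega⟩ : Fin (j + 2)) = Fin.last (j + 1) := rfl
          rw [this, Fin.snoc_last]
        have h3 : (fun t : Fin (j + 1) =>
            (Fin.snoc (fun _ => (1 : FreeGroup Unit)) x : Fin (j + 2) → _) t.castSucc) =
            fun _ => (1 : FreeGroup Unit) := by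
          funext t; rw [Fin.snoc_castSucc]
        simp only [gamma]
        rw [h1, h2, h3, gamma_ones_s9, inv_one, one_mul, xpow_aux, ← zpow_mul]
  refine ⟨key, ?_⟩
  rw [key]
  intro hone
  have h2 := congrArg (FreeGroup.lift (fun _ : Unit => Multiplicative.ofAdd (1 : ℤ))) hone
  simp only [hx, map_zpow, map_one, FreeGroup.lift_apply_of] at h2
  have h3 : (1 - 2 * p) * (-2) ^ i = 0 := by
    have := congrArg Multiplicative.toAdd h2
    simpa using this
  rcases mul_eq_zero.mp h3 with h4 | h4
  · omega
  · exact pow_ne_zero i (by norm_num) h4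
end

section
/- Let A be a free group of finite rank (say A = FreeGroup (Fin r)), let G := A * FreeGroup Unit be the free product of A with the free group on one generator, and let g be an element of G that does not belong to the subgroup A of G (the image of the canonical inclusion of the factor A). Then the homomorphism φ : A * FreeGroup Unit → G which is the canonical inclusion on the factor A and sends the generator of FreeGroup Unit to g is injective. (Claim II: the subgroup of G generated by A together with g is the free product A * ⟨g⟩.) -/
/-!
Replacing `g` by `a * g * b` with `a, b ∈ A` composes the substitution map `t ↦ g` with the
automorphism `t ↦ a⁻¹ * t * b⁻¹` of `A ∗ ⟨t⟩`, so we may assume that the reduced word of `g`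
neither begins nor ends with a letter of `A`. In a free product of torsion-free groups every
positive power of a reduced word from factor `i` to factor `j` is again a reduced word from `i`
to `j` (induction on the length, splitting off the first and last letters). So on reduced words
the nonzero powers of `g` move every word that does not begin in `i` or `j` to a word beginning
in `i` or `j`, and nontrivial elements of `A` move those back; the ping-pong lemma for free
products concludes.
-/

open Function

namespace Monoid.CoprodI

variable {ι : Type*} {G : ι → Type*} [∀ i, Group (G i)]

namespace NeWord

theorem head_ne_one {i j : ι} (W : NeWord G i j) : W.head ≠ 1 := by
  induction W with
  | singleton x hx => exact hx
  | append W₁ _ _ ih => exact ih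

theorem last_ne_one {i j : ι} (W : NeWord G i j) : W.last ≠ 1 := by
  simpa using W.inv.head_ne_one

theorem length_toList_inv {i j : ι} (W : NeWord G i j) :
    W.inv.toList.length = W.toList.length := by
  induction W with
  | singleton => rfl
  | append _ _ _ ih₁ ih₂ => simp [inv, ih₁, ih₂, add_comm]

theorem prod_eq_of_head_or_exists_of_head_mul {i j : ι} (W : NeWord G i j) :
    (i = j ∧ W.prod = of W.head) ∨ ∃ k, k ≠ i ∧ ∃ V : NeWord G k j,
      W.prod = of W.head * V.prod ∧ V.toList.length < W.toList.length := by
  induction W with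
  | singleton x hx => exact .inl ⟨rfl, prod_singleton x hx⟩
  | @append i j' k' l W₁ hne W₂ ih₁ _ =>
    rcases ih₁ with ⟨rfl, h₁⟩ | ⟨k, hk, V, h₁, hV⟩
    · refine .inr ⟨k', hne.symm, W₂, by rw [append_prod, h₁, append_head], ?_⟩
      simpa using List.length_pos_iff.mpr W₁.toList_ne_nil
    · refine .inr ⟨k, hk, V.append hne W₂, ?_, ?_⟩
      · rw [append_prod, append_prod, h₁, append_head, mul_assoc]
      · simp only [toList, List.length_append]
        omega

theorem prod_eq_of_last_or_exists_mul_of_last {i j : ι} (W : NeWord G i j) :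
    (i = j ∧ W.prod = of W.last) ∨ ∃ k, k ≠ j ∧ ∃ V : NeWord G i k,
      W.prod = V.prod * of W.last ∧ V.toList.length < W.toList.length := by
  rcases W.inv.prod_eq_of_head_or_exists_of_head_mul with ⟨rfl, h⟩ | ⟨k, hk, V, h, hV⟩
  · refine .inl ⟨rfl, ?_⟩
    rw [← inv_inv W.prod, ← inv_prod, h, inv_head, map_inv, inv_inv]
  · refine .inr ⟨k, hk, V.inv, ?_, by rwa [length_toList_inv, ← W.length_toList_inv]⟩
    rw [← inv_inv W.prod, ← inv_prod, h, inv_head, inv_prod, mul_inv_rev, map_inv, inv_inv]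

theorem exists_prod_eq_pow_mul {a b i : ι} (U : NeWord G a i) (Z : NeWord G a b) (hi : i ≠ a)
    (m : ℕ) : ∃ Q : NeWord G a b, Q.prod = U.prod ^ m * Z.prod := by
  induction m with
  | zero => exact ⟨Z, by simp⟩
  | succ m ih =>
    obtain ⟨Q, hQ⟩ := ih
    exact ⟨U.append hi Q, by rw [append_prod, hQ, pow_succ', mul_assoc]⟩

theorem exists_prod_eq_pow [∀ i, IsMulTorsionFree (G i)] {i j : ι} (W : NeWord G i j) {n : ℕ}
    (hn : n ≠ 0) : ∃ W' : NeWord G i j, W'.prod = W.prod ^ n := by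
  obtain ⟨m, rfl⟩ := Nat.exists_eq_add_one_of_ne_zero hn
  rcases W.prod_eq_of_head_or_exists_of_head_mul with ⟨rfl, hW⟩ | ⟨k, hki, V, hWV, hVW⟩
  · refine ⟨singleton (W.head ^ (m + 1)) ((pow_eq_one_iff_left hn).not.mpr W.head_ne_one), ?_⟩
    rw [hW, prod_singleton, map_pow]
  rcases eq_or_ne i j with hij | hij
  swap
  · obtain ⟨Q, hQ⟩ := exists_prod_eq_pow_mul W W hij.symm m
    exact ⟨Q, by rw [hQ, pow_succ]⟩
  rcases V.prod_eq_of_last_or_exists_mul_of_last with ⟨hkj, -⟩ | ⟨b, hbj, Z, hVZ, hZV⟩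
  · exact absurd (hkj.trans hij.symm) hki
  obtain ⟨Z', hZ'⟩ := Z.exists_prod_eq_pow hn
  subst hij
  -- `W = h Z l`: if `l * h = 1` it is the conjugate of the shorter `Z` by `h`, otherwise
  -- `W ^ (m + 1) = h (Z (l * h)) ^ m Z l` is already reduced.
  set h := W.head
  set l := V.last
  have hx : W.prod = of h * Z.prod * of l := by rw [hWV, hVZ, mul_assoc]
  by_cases hlh : l * h = 1
  · have hl : of l = (of h)⁻¹ := by rw [← map_inv, eq_inv_of_mul_eq_one_left hlh]
    refine ⟨((singleton h W.head_ne_one).append hki.symm Z').append hbj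
      (singleton l V.last_ne_one), ?_⟩
    rw [append_prod, append_prod, prod_singleton, prod_singleton, hZ', hx, hl, conj_pow]
  · obtain ⟨Q, hQ⟩ := exists_prod_eq_pow_mul (Z.append hbj (singleton (l * h) hlh)) Z hki.symm m
    refine ⟨((singleton h W.head_ne_one).append hki.symm Q).append hbj
      (singleton l V.last_ne_one), ?_⟩
    rw [append_prod, append_prod, prod_singleton, prod_singleton, hQ, append_prod,
      prod_singleton, hx, map_mul, ← mul_assoc Z.prod, ← mul_assoc (of h), ← mul_pow_mul,
      pow_succ]
    simp only [mul_assoc]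
termination_by W.toList.length
decreasing_by omega

theorem fstIdx_prod_smul [DecidableEq ι] [∀ i, DecidableEq (G i)] {i j : ι} (W : NeWord G i j)
    {w : Word G} (hw : w.fstIdx ≠ some j) : (W.prod • w).fstIdx = some i := by
  induction W generalizing w with
  | singleton x hx =>
    rw [prod_singleton, ← Word.cons_eq_smul (h1 := hw) (h2 := hx), Word.fstIdx_cons]
  | append W₁ hne W₂ ih₁ ih₂ =>
    rw [append_prod, mul_smul]
    exact ih₁ (by rw [ih₂ hw]; simpa using hne.symm)

theorem fstIdx_zpow_prod_smul [DecidableEq ι] [∀ i, DecidableEq (G i)]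
    [∀ i, IsMulTorsionFree (G i)] {i j : ι} (W : NeWord G i j) {k : ℤ} (hk : k ≠ 0) {w : Word G}
    (hi : w.fstIdx ≠ some i) (hj : w.fstIdx ≠ some j) :
    (W.prod ^ k • w).fstIdx = some i ∨ (W.prod ^ k • w).fstIdx = some j := by
  obtain ⟨n, rfl | rfl⟩ := k.eq_nat_or_neg
  · obtain ⟨V, hV⟩ := W.exists_prod_eq_pow (n := n) (by omega)
    left
    rw [zpow_natCast, ← hV]
    exact V.fstIdx_prod_smul hj
  · obtain ⟨V, hV⟩ := W.exists_prod_eq_pow (n := n) (by omega)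
    right
    rw [zpow_neg, zpow_natCast, ← hV, ← inv_prod]
    exact V.inv.fstIdx_prod_smul hi

end NeWord

theorem exists_neWord_prod_eq {x : CoprodI G} (hx : x ≠ 1) :
    ∃ (i j : ι) (W : NeWord G i j), W.prod = x := by
  classical
  have hw : Word.equiv x ≠ Word.empty := fun h =>
    hx ((Word.equiv.symm_apply_apply x).symm.trans (by rw [h]; exact Word.prod_empty))
  obtain ⟨i, j, W, hW⟩ := NeWord.of_word _ hw
  exact ⟨i, j, W, by rw [NeWord.prod, hW]; exact Word.equiv.symm_apply_apply x⟩

theorem NeWord.exists_prod_eq_of_mul_prod {i₀ i j : ι} (W : NeWord G i j)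
    (hW : W.prod ∉ (of : G i₀ →* CoprodI G).range) :
    ∃ (a : G i₀) (k : ι) (V : NeWord G k j), k ≠ i₀ ∧ V.prod = of a * W.prod := by
  by_cases hi : i = i₀
  · subst hi
    rcases W.prod_eq_of_head_or_exists_of_head_mul with ⟨-, h⟩ | ⟨k, hk, V, h, -⟩
    · exact absurd ⟨W.head, h.symm⟩ hW
    · exact ⟨W.head⁻¹, k, V, hk, by rw [h, map_inv, inv_mul_cancel_left]⟩
  · exact ⟨1, i, W, hi, by rw [map_one, one_mul]⟩

theorem exists_neWord_prod_eq_of_mul_mul {i₀ : ι} {x : CoprodI G}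
    (hx : x ∉ (of : G i₀ →* CoprodI G).range) :
    ∃ (a b : G i₀) (i j : ι) (W : NeWord G i j), i ≠ i₀ ∧ j ≠ i₀ ∧ W.prod = of a * x * of b := by
  obtain ⟨i, j, W, rfl⟩ := exists_neWord_prod_eq (x := x) fun h => hx (h ▸ one_mem _)
  obtain ⟨a, k, V, hk, hV⟩ := W.exists_prod_eq_of_mul_prod hx
  obtain ⟨b, l, U, hl, hU⟩ := V.inv.exists_prod_eq_of_mul_prod (by
    rwa [NeWord.inv_prod, inv_mem_iff, hV, mul_mem_cancel_left (MonoidHom.mem_range.mpr ⟨a, rfl⟩)])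
  refine ⟨a, b⁻¹, k, l, U.inv, hk, hl, ?_⟩
  rw [NeWord.inv_prod, hU, NeWord.inv_prod, hV, map_inv]
  group

end Monoid.CoprodI

namespace Monoid.Coprod

universe u

variable {M N : Type u} [Group M] [Group N]

instance instGroupCond : ∀ b, Group (cond b M N)
  | true => ‹Group M›
  | false => ‹Group N›

instance [IsMulTorsionFree M] [IsMulTorsionFree N] : ∀ b, IsMulTorsionFree (cond b M N)
  | true => ‹IsMulTorsionFree M›
  | false => ‹IsMulTorsionFree N›

def mulEquivCoprodI : M ∗ N ≃* CoprodI (fun b => cond b M N) :=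
  MonoidHom.toMulEquiv
    (lift (CoprodI.of (M := fun b => cond b M N) (i := true))
      (CoprodI.of (M := fun b => cond b M N) (i := false)))
    (CoprodI.lift fun b => b.rec (motive := fun b => cond b M N →* M ∗ N) inr inl)
    (by ext <;> simp)
    (by
      refine CoprodI.ext_hom _ _ fun b => ?_
      cases b <;> ext <;> simp)

@[simp]
theorem mulEquivCoprodI_inl (m : M) :
    mulEquivCoprodI (inl m : M ∗ N) = CoprodI.of (M := fun b => cond b M N) (i := true) m := by
  simp [mulEquivCoprodI]

@[simp]
theorem mulEquivCoprodI_inr (n : N) :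
    mulEquivCoprodI (inr n : M ∗ N) = CoprodI.of (M := fun b => cond b M N) (i := false) n := by
  simp [mulEquivCoprodI]

theorem coprodI_lift_comp_mulEquivCoprodI {P : Type*} [Monoid P] (f : M →* P) (g : N →* P) :
    (CoprodI.lift fun b => b.rec (motive := fun b => cond b M N →* P) g f).comp
      mulEquivCoprodI.toMonoidHom = lift f g := by
  ext <;> simp

end Monoid.Coprod

namespace Monoid.CoprodI

open Coprod

variable {ι : Type*} {G : ι → Type} [∀ i, Group (G i)]

theorem injective_lift_of_neWord [∀ i, IsMulTorsionFree (G i)] {i₀ i j : ι} (W : NeWord G i j)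
    (hi : i ≠ i₀) (hj : j ≠ i₀) :
    Injective (Coprod.lift (of : G i₀ →* CoprodI G) (FreeGroup.lift fun _ : Unit => W.prod)) := by
  classical
  rw [← coprodI_lift_comp_mulEquivCoprodI, MonoidHom.coe_comp]
  refine Injective.comp ?_ mulEquivCoprodI.injective
  let X : Bool → Set (Word G) := fun b => b.rec
    {w | w.fstIdx = some i ∨ w.fstIdx = some j} {w | w.fstIdx ≠ some i ∧ w.fstIdx ≠ some j}
  refine lift_injective_of_ping_pong _ (Or.inr ⟨false, ?_⟩) X ?_ ?_ ?_
  · show 3 ≤ Cardinal.mk (FreeGroup Unit)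
    rw [FreeGroup.freeGroupUnitEquivInt.cardinal_eq, Cardinal.mk_denumerable]
    exact Cardinal.natCast_le_aleph0
  · rintro (_ | _)
    · exact ⟨W.prod • Word.empty, .inl (W.fstIdx_prod_smul (by simp [Word.fstIdx, Word.empty]))⟩
    · exact ⟨Word.empty, by simp [X, Word.fstIdx, Word.empty]⟩
  · rintro (_ | _) (_ | _) h <;> simp only [ne_eq, not_true_eq_false] at h <;>
      simp only [onFun, X, Set.disjoint_left, Set.mem_ofPred_eq] <;> tauto
  · rintro (_ | _) (_ | _) h
    · exact absurd rfl h
    · refine FreeGroup.freeGroupUnitEquivInt.forall_congr_left.mpr fun k hk1 => ?_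
      have hk : k ≠ 0 := by rintro rfl; simp [FreeGroup.freeGroupUnitEquivInt] at hk1
      rintro _ ⟨w, ⟨hwi, hwj⟩, rfl⟩
      change FreeGroup.lift (fun _ => W.prod) (FreeGroup.of () ^ k) • w ∈ X false
      rw [map_zpow, FreeGroup.lift_apply_of]
      exact W.fstIdx_zpow_prod_smul hk hwi hwj
    · rintro (a : G i₀) ha _ ⟨w, hw, rfl⟩
      have hw : w.fstIdx ≠ some i₀ := by rintro h; rcases hw with hw | hw <;> simp_all
      have h := (NeWord.singleton (M := G) a ha).fstIdx_prod_smul hw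
      rw [NeWord.prod_singleton] at h
      show _ ∧ _
      simp [h, hi.symm, hj.symm]
    · exact absurd rfl h

end Monoid.CoprodI

namespace Monoid.Coprod

variable {A : Type*} [Group A]

def subst (g : A ∗ FreeGroup Unit) : A ∗ FreeGroup Unit →* A ∗ FreeGroup Unit :=
  lift inl (FreeGroup.lift fun _ => g)

theorem subst_comp_subst (g h : A ∗ FreeGroup Unit) :
    (subst g).comp (subst h) = subst (subst g h) := by
  ext <;> simp [subst]

theorem subst_inr_of : subst (inr (FreeGroup.of ()) : A ∗ FreeGroup Unit) = MonoidHom.id _ := by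
  ext <;> simp [subst]

theorem injective_subst_of_mul_mul {g : A ∗ FreeGroup Unit} (a b : A)
    (h : Injective (subst (inl a * g * inl b))) : Injective (subst g) := by
  let t : A ∗ FreeGroup Unit := inr (FreeGroup.of ())
  have hinv :
      (subst (inl a * t * inl b)).comp (subst (inl a⁻¹ * t * inl b⁻¹)) = MonoidHom.id _ := by
    rw [subst_comp_subst, ← subst_inr_of]
    congr 1
    simp [subst, t, ← mul_assoc]
  have hg : subst g = (subst (inl a * g * inl b)).comp (subst (inl a⁻¹ * t * inl b⁻¹)) := by
    rw [subst_comp_subst]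
    congr 1
    simp [subst, t, ← mul_assoc]
  rw [hg, MonoidHom.coe_comp]
  exact h.comp (LeftInverse.injective fun x => DFunLike.congr_fun hinv x)

end Monoid.Coprod

open Monoid Monoid.Coprod

/-- Claim II: if `A` is a free group of finite rank, `G = A ∗ F(z)`, and `g ∈ G` does not lie
in the subgroup `A`, then `A` together with `g` generate their free product inside `G`: the
substitution homomorphism `A ∗ F(z) → G`, identical on `A` and sending `z ↦ g`, is
injective. -/
theorem free_factor_with_extra_element (r : ℕ)
    (g : FreeGroup (Fin r) ∗ FreeGroup Unit)
    (hg : g ∉ (Coprod.inl :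
      FreeGroup (Fin r) →* FreeGroup (Fin r) ∗ FreeGroup Unit).range) :
    Function.Injective
      (Coprod.lift
        (Coprod.inl : FreeGroup (Fin r) →* FreeGroup (Fin r) ∗ FreeGroup Unit)
        (FreeGroup.lift (fun _ : Unit => g))) := by
  set e := mulEquivCoprodI (M := FreeGroup (Fin r)) (N := FreeGroup Unit)
  have hx : e g ∉ (CoprodI.of (i := true)).range := by
    rintro ⟨a, ha⟩
    exact hg ⟨a, e.injective (by simpa [e] using ha)⟩
  obtain ⟨a, b, i, j, W, hi, hj, hW⟩ := CoprodI.exists_neWord_prod_eq_of_mul_mul hx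
  refine injective_subst_of_mul_mul (A := FreeGroup (Fin r)) a b ?_
  refine Injective.of_comp (f := e) ?_
  convert CoprodI.injective_lift_of_neWord W hi hj using 1
  refine congrArg DFunLike.coe (?_ : e.toMonoidHom.comp (subst _) = _)
  ext <;> simp [subst, hW, e]
end

section
/- Let A be a free group of finite rank, let G := A * FreeGroup Unit be the free product of A with the free group on one generator, and let g be an element of G that does not belong to the subgroup A of G. Let w be an element of A * FreeGroup Unit that does not belong to the factor A, and let φ : A * FreeGroup Unit → G be the homomorphism which is the canonical inclusion on A and sends the generator of FreeGroup Unit to g (substitution z ↦ g). Then φ(w) does not belong to the subgroup A of G; in particular φ(w) ≠ c for every element c of the subgroup A, i.e. c⁻¹ φ(w) ≠ 1. -/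
/-!
Identify `A ∗ ⟨z⟩` with the free group on `α ⊕ Unit`. An element outside `A` has the form
`p * y * q` with `p, q ∈ A` and `y = z^e₁ a₁ z^e₂ ⋯ aₙ₋₁ z^eₙ`, all `eᵢ ≠ 0` and all `aᵢ ∈ A` nontrivial.
Writing `g = p * h * q` in this way, the substitution `z ↦ g` is the automorphism `z ↦ p z q`,
which fixes `A` and therefore preserves its complement, followed by `z ↦ h`. The reduced word of
`h` begins and ends with a `z`-letter, and by cyclic reduction so does that of every `hᵉ`, `e ≠ 0`.
Hence nothing cancels across the syllables of `h^e₁ a₁ h^e₂ ⋯ aₙ₋₁ h^eₙ`, whose reduced word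
therefore still begins with a `z`-letter, so it does not lie in `A`.
-/

open List

theorem List.exists_eq_run_append_run_append {γ : Type*} (p : γ → Bool) {l : γ} {T : List γ}
    (hl : p l) : ∃ S P R, l :: T = S ++ P ++ R ∧ S ≠ [] ∧ (∀ s ∈ S, p s) ∧ (∀ x ∈ P, !p x) ∧
      (R = [] ∨ P ≠ [] ∧ ∃ r R', R = r :: R' ∧ p r) := by
  set M := T.dropWhile p
  refine ⟨l :: T.takeWhile p, M.takeWhile (!p ·), M.dropWhile (!p ·), by simp [M], cons_ne_nil _ _,
    ?_, fun _ hx => (mem_takeWhile_imp hx :), ?_⟩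
  · rintro s (_ | ⟨_, hs⟩)
    exacts [hl, mem_takeWhile_imp hs]
  · rcases hR : M.dropWhile (!p ·) with _ | ⟨r, R'⟩
    · exact .inl rfl
    have hr := head?_dropWhile_not (!p ·) M
    rw [hR] at hr
    refine .inr ⟨fun hP => ?_, r, R', rfl, by simpa using hr⟩
    have hM : M = r :: R' := by
      simpa [hP, hR] using (takeWhile_append_dropWhile (p := (!p ·)) (l := M)).symm
    have := head?_dropWhile_not p T
    simp_all [M]

namespace FreeGroup

variable {α β : Type*}

abbrev leftFactor (α β : Type*) : Subgroup (FreeGroup (α ⊕ β)) := (map Sum.inl).range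

theorem mk_mem_closure {s : Set α} {L : List (α × Bool)} (hL : ∀ l ∈ L, l.1 ∈ s) :
    mk L ∈ Subgroup.closure (of '' s) := by
  induction L with
  | nil => exact one_mem _
  | cons l L ih =>
    rw [show l :: L = [l] ++ L from rfl, ← mul_mk]
    refine mul_mem ?_ (ih fun l' hl' => hL l' (mem_cons_of_mem l hl'))
    have hof : of l.1 ∈ Subgroup.closure (of '' s) :=
      Subgroup.subset_closure ⟨l.1, hL l mem_cons_self, rfl⟩
    obtain ⟨a, _ | _⟩ := l
    · exact inv_mem hof
    · exact hof

theorem mk_mem_leftFactor {L : List ((α ⊕ β) × Bool)} (hL : ∀ l ∈ L, l.1.isLeft) :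
    mk L ∈ leftFactor α β := by
  rw [leftFactor, range_map]
  exact mk_mem_closure fun l hl => (Sum.isLeft_iff.1 (hL l hl)).imp fun _ => Eq.symm

theorem mk_mem_zpowers {L : List ((α ⊕ Unit) × Bool)} (hL : ∀ l ∈ L, l.1.isRight) :
    mk L ∈ Subgroup.zpowers (of (Sum.inr ())) := by
  rw [Subgroup.zpowers_eq_closure, ← Set.image_singleton]
  refine mk_mem_closure fun l hl => ?_
  obtain ⟨⟨⟩, h⟩ := Sum.isRight_iff.1 (hL l hl)
  exact h

theorem isLeft_ne_of_isRight_of_isLeft {s t : α ⊕ β} (hs : s.isRight) (ht : t.isLeft) :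
    s.isLeft ≠ t.isLeft := by
  cases s <;> cases t <;> simp_all

theorem IsReduced.append_of_isLeft_ne {L₁ L₂ : List ((α ⊕ β) × Bool)} (h₁ : IsReduced L₁)
    (h₂ : IsReduced L₂) (h : ∀ a ∈ L₁.getLast?, ∀ b ∈ L₂.head?, a.1.isLeft ≠ b.1.isLeft) :
    IsReduced (L₁ ++ L₂) :=
  isChain_append.2 ⟨h₁, h₂, fun a ha b hb hab => absurd (congrArg Sum.isLeft hab) (h a ha b hb)⟩

def subst (g : FreeGroup (α ⊕ Unit)) : FreeGroup (α ⊕ Unit) →* FreeGroup (α ⊕ Unit) :=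
  lift (Sum.elim (fun a => of (Sum.inl a)) fun _ => g)

@[simp]
theorem subst_of_inl (g : FreeGroup (α ⊕ Unit)) (a : α) :
    subst g (of (Sum.inl a)) = of (Sum.inl a) :=
  lift_apply_of

@[simp]
theorem subst_of_inr (g : FreeGroup (α ⊕ Unit)) (u : Unit) : subst g (of (Sum.inr u)) = g :=
  lift_apply_of

theorem subst_apply_of_mem_leftFactor (g : FreeGroup (α ⊕ Unit)) {b : FreeGroup (α ⊕ Unit)}
    (hb : b ∈ leftFactor α Unit) : subst g b = b := by
  obtain ⟨a, rfl⟩ := hb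
  rw [← MonoidHom.comp_apply]
  congr 1
  ext
  simp

theorem subst_subst (u v x : FreeGroup (α ⊕ Unit)) :
    subst u (subst v x) = subst (subst u v) x := by
  rw [← MonoidHom.comp_apply]
  congr 1
  ext (_ | _) <;> simp

theorem subst_of_inr_apply (x : FreeGroup (α ⊕ Unit)) : subst (of (Sum.inr ())) x = x := by
  rw [← MonoidHom.id_apply _ x]
  congr 1
  ext (_ | _) <;> simp

theorem subst_mul_mul (p q h w : FreeGroup (α ⊕ Unit)) (hp : p ∈ leftFactor α Unit)
    (hq : q ∈ leftFactor α Unit) :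
    subst (p * h * q) w = subst h (subst (p * of (Sum.inr ()) * q) w) := by
  simp [subst_subst, subst_apply_of_mem_leftFactor h hp, subst_apply_of_mem_leftFactor h hq]

theorem subst_mul_mul_notMem {p q w : FreeGroup (α ⊕ Unit)} (hp : p ∈ leftFactor α Unit)
    (hq : q ∈ leftFactor α Unit) (hw : w ∉ leftFactor α Unit) :
    subst (p * of (Sum.inr ()) * q) w ∉ leftFactor α Unit := by
  intro hmem
  have hinv : subst (p⁻¹ * of (Sum.inr ()) * q⁻¹) (subst (p * of (Sum.inr ()) * q) w) = w := by
    simp [subst_subst, subst_apply_of_mem_leftFactor _ hp, subst_apply_of_mem_leftFactor _ hq,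
      ← mul_assoc, subst_of_inr_apply]
  rw [← hinv, subst_apply_of_mem_leftFactor _ hmem] at hw
  exact hw hmem

inductive IsAlternating : FreeGroup (α ⊕ Unit) → Prop
  | zpow {e : ℤ} (he : e ≠ 0) : IsAlternating (of (Sum.inr ()) ^ e)
  | zpow_mul_mul {e : ℤ} (he : e ≠ 0) {a y : FreeGroup (α ⊕ Unit)} (ha : a ∈ leftFactor α Unit)
      (ha₁ : a ≠ 1) (hy : IsAlternating y) : IsAlternating (of (Sum.inr ()) ^ e * a * y)

section Words

variable [DecidableEq α] [DecidableEq β]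

theorem mem_leftFactor_iff {x : FreeGroup (α ⊕ β)} :
    x ∈ leftFactor α β ↔ ∀ l ∈ x.toWord, l.1.isLeft := by
  constructor
  · rintro ⟨a, rfl⟩ l hl
    rw [← mk_toWord (x := a), map.mk, toWord_mk] at hl
    obtain ⟨l', -, rfl⟩ := List.mem_map.1 (reduce.red.sublist.subset hl)
    rfl
  · intro h
    rw [← mk_toWord (x := x)]
    exact mk_mem_leftFactor h

theorem mk_ne_one_of_isReduced {L : List (α × Bool)} (hL : IsReduced L) (hne : L ≠ []) :
    mk L ≠ 1 := by
  rwa [Ne, ← toWord_eq_nil_iff, toWord_mk, hL.reduce_eq]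

def IsRightBordered (x : FreeGroup (α ⊕ β)) : Prop :=
  x ≠ 1 ∧ (∀ l ∈ x.toWord.head?, l.1.isRight) ∧ ∀ l ∈ x.toWord.getLast?, l.1.isRight

theorem isRightBordered_of (b : β) : IsRightBordered (of (Sum.inr b : α ⊕ β)) := by
  simp [IsRightBordered, toWord_of]

namespace IsRightBordered

variable {x y a : FreeGroup (α ⊕ β)}

theorem notMem_leftFactor (hx : IsRightBordered x) : x ∉ leftFactor α β := by
  intro hmem
  obtain ⟨l, hl⟩ := Option.ne_none_iff_exists'.1
    (mt head?_eq_none_iff.1 (mt toWord_eq_nil_iff.1 hx.1))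
  exact isLeft_ne_of_isRight_of_isLeft (hx.2.1 l hl)
    (mem_leftFactor_iff.1 hmem l (mem_of_mem_head? hl)) rfl

theorem inv (hx : IsRightBordered x) : IsRightBordered x⁻¹ := by
  refine ⟨inv_ne_one.2 hx.1, ?_, ?_⟩ <;>
    simp only [toWord_inv, invRev, head?_reverse, getLast?_reverse, getLast?_map, head?_map,
      Option.mem_map] <;>
    rintro _ ⟨l, hl, rfl⟩
  exacts [hx.2.2 l hl, hx.2.1 l hl]

-- With `x.toWord = C ++ R ++ invRev C` and `R` cyclically reduced, `(x ^ n).toWord` is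
-- `C ++ Rⁿ ++ invRev C`, so it has the same first and last letters as `x.toWord`.
open reduceCyclically in
theorem pow (hx : IsRightBordered x) {n : ℕ} (hn : n ≠ 0) : IsRightBordered (x ^ n) := by
  have hword := conj_conjugator_reduceCyclically x.toWord
  have hpow : (x ^ n).toWord = conjugator x.toWord ++
      (replicate n (reduceCyclically x.toWord)).flatten ++ invRev (conjugator x.toWord) := by
    rw [toWord_pow, reduce_flatten_replicate isReduced_toWord, if_neg hn]
  obtain ⟨hx₁, hhead, hlast⟩ := hx
  rw [← hword] at hhead hlast
  refine ⟨fun h => hx₁ ((pow_eq_one_iff_left hn).1 h), ?_, ?_⟩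
  · simpa only [hpow, head?_append, head?_flatten_replicate hn] using hhead
  · simpa only [hpow, getLast?_append, getLast?_flatten_replicate hn] using hlast

theorem zpow (hx : IsRightBordered x) {e : ℤ} (he : e ≠ 0) : IsRightBordered (x ^ e) := by
  obtain ⟨n, rfl | rfl⟩ := e.eq_nat_or_neg
  · exact_mod_cast hx.pow (n := n) (by omega)
  · rw [zpow_neg, zpow_natCast]
    exact (hx.pow (by omega)).inv

theorem mul_mul (hx : IsRightBordered x) (ha : a ∈ leftFactor α β) (ha₁ : a ≠ 1)
    (hy : IsRightBordered y) : IsRightBordered (x * a * y) := by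
  have hxne : x.toWord ≠ [] := mt toWord_eq_nil_iff.1 hx.1
  have hane : a.toWord ≠ [] := mt toWord_eq_nil_iff.1 ha₁
  have hyne : y.toWord ≠ [] := mt toWord_eq_nil_iff.1 hy.1
  have haleft := mem_leftFactor_iff.1 ha
  have hred : IsReduced (x.toWord ++ a.toWord ++ y.toWord) := by
    refine .append_of_isLeft_ne (.append_of_isLeft_ne isReduced_toWord isReduced_toWord ?_)
      isReduced_toWord ?_
    · intro l hl l' hl'
      exact isLeft_ne_of_isRight_of_isLeft (hx.2.2 l hl) (haleft l' (mem_of_mem_head? hl'))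
    · intro l hl l' hl'
      rw [getLast?_append_of_ne_nil _ hane] at hl
      exact (isLeft_ne_of_isRight_of_isLeft (hy.2.1 l' hl')
        (haleft l (mem_of_mem_getLast? hl))).symm
  have hword : (x * a * y).toWord = x.toWord ++ a.toWord ++ y.toWord := by
    rw [← hred.reduce_eq, ← toWord_mk, ← mul_mk, ← mul_mk, mk_toWord, mk_toWord, mk_toWord]
  refine ⟨?_, ?_, ?_⟩
  · rw [Ne, ← toWord_eq_nil_iff, hword]
    simp [hxne]
  · rw [hword, append_assoc, head?_append_of_ne_nil _ hxne]
    exact hx.2.1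
  · rw [hword, getLast?_append_of_ne_nil _ hyne]
    exact hy.2.2

end IsRightBordered

theorem IsAlternating.isRightBordered_subst {h x : FreeGroup (α ⊕ Unit)}
    (hh : IsRightBordered h) (hx : IsAlternating x) : IsRightBordered (subst h x) := by
  induction hx with
  | zpow he => simpa using hh.zpow he
  | zpow_mul_mul he ha ha₁ _ ih =>
    simpa [subst_apply_of_mem_leftFactor h ha] using (hh.zpow he).mul_mul ha ha₁ ih

theorem IsAlternating.isRightBordered {x : FreeGroup (α ⊕ Unit)} (hx : IsAlternating x) :
    IsRightBordered x := by
  simpa [subst_of_inr_apply] using hx.isRightBordered_subst (isRightBordered_of ())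

theorem exists_zpow_eq_mk {S : List ((α ⊕ Unit) × Bool)} (hS : IsReduced S) (hne : S ≠ [])
    (hright : ∀ l ∈ S, l.1.isRight) : ∃ e : ℤ, e ≠ 0 ∧ of (Sum.inr ()) ^ e = mk S := by
  obtain ⟨e, he⟩ := Subgroup.mem_zpowers_iff.1 (mk_mem_zpowers hright)
  refine ⟨e, ?_, he⟩
  rintro rfl
  exact mk_ne_one_of_isReduced hS hne (by simpa using he.symm)

theorem exists_isAlternating_mul {l : (α ⊕ Unit) × Bool} {T : List ((α ⊕ Unit) × Bool)}
    (hL : IsReduced (l :: T)) (hl : l.1.isRight) :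
    ∃ y, IsAlternating y ∧ ∃ q ∈ leftFactor α Unit, mk (l :: T) = y * q := by
  induction h : T.length using Nat.strong_induction_on generalizing l T with
  | _ n ih =>
  obtain ⟨S, P, R, hsplit, hSne, hS, hP, hR⟩ :=
    exists_eq_run_append_run_append (fun x : (α ⊕ Unit) × Bool => x.1.isRight) (T := T) hl
  rw [hsplit] at hL ⊢
  obtain ⟨e, he, hSe⟩ := exists_zpow_eq_mk (hL.infix ⟨[], P ++ R, by simp⟩) hSne hS
  have hPleft : mk P ∈ leftFactor α Unit :=
    mk_mem_leftFactor fun x hx => by simpa using hP x hx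
  rw [← mul_mk, ← mul_mk, ← hSe]
  obtain rfl | ⟨hPne, r, R', rfl, hr⟩ := hR
  · exact ⟨_, .zpow he, mk P, hPleft, by rw [← one_eq_mk, mul_one]⟩
  have hlen : R'.length < n := by
    have := congrArg length hsplit
    simp only [length_cons, length_append] at this
    have := length_pos_of_ne_nil hSne
    omega
  obtain ⟨y, hy, q, hq, hRq⟩ := ih _ hlen (hL.infix ⟨S ++ P, [], by simp⟩) hr rfl
  refine ⟨_, .zpow_mul_mul he hPleft ?_ hy, q, hq, by rw [hRq]; group⟩
  exact mk_ne_one_of_isReduced (hL.infix ⟨S, r :: R', by simp⟩) hPne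

theorem exists_mem_mul_isAlternating_mul {x : FreeGroup (α ⊕ Unit)}
    (hx : x ∉ leftFactor α Unit) :
    ∃ p ∈ leftFactor α Unit, ∃ y, IsAlternating y ∧ ∃ q ∈ leftFactor α Unit, x = p * y * q := by
  have hsplit := takeWhile_append_dropWhile (p := fun l : (α ⊕ Unit) × Bool => l.1.isLeft)
    (l := x.toWord)
  rcases hM : x.toWord.dropWhile (·.1.isLeft) with _ | ⟨m, M⟩
  · exact absurd (mem_leftFactor_iff.2 (dropWhile_eq_nil_iff.1 hM)) hx
  have hm := head?_dropWhile_not (fun l : (α ⊕ Unit) × Bool => l.1.isLeft) x.toWord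
  rw [hM] at hm hsplit
  have hred : IsReduced (m :: M) := isReduced_toWord.infix ⟨_, [], by rw [hsplit, append_nil]⟩
  obtain ⟨y, hy, q, hq, hMq⟩ := exists_isAlternating_mul hred (by simpa using hm)
  refine ⟨mk (x.toWord.takeWhile (·.1.isLeft)),
    mk_mem_leftFactor fun _ hl => (mem_takeWhile_imp hl :), y, hy, q, hq, ?_⟩
  rw [mul_assoc, ← hMq, mul_mk, hsplit, mk_toWord]

theorem subst_notMem_leftFactor {g w : FreeGroup (α ⊕ Unit)} (hg : g ∉ leftFactor α Unit)
    (hw : w ∉ leftFactor α Unit) : subst g w ∉ leftFactor α Unit := by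
  obtain ⟨p, hp, h, hh, q, hq, rfl⟩ := exists_mem_mul_isAlternating_mul hg
  obtain ⟨p', hp', y, hy, q', hq', hw'⟩ :=
    exists_mem_mul_isAlternating_mul (subst_mul_mul_notMem hp hq hw)
  rw [subst_mul_mul _ _ _ _ hp hq, hw', _root_.map_mul, _root_.map_mul,
    subst_apply_of_mem_leftFactor _ hp', subst_apply_of_mem_leftFactor _ hq',
    Subgroup.mul_mem_cancel_right _ hq', Subgroup.mul_mem_cancel_left _ hp']
  exact (hy.isRightBordered_subst hh.isRightBordered).notMem_leftFactor

end Words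

section Coprod

open Monoid Coprod

variable (α β) in
def coprodMulEquiv : FreeGroup α ∗ FreeGroup β ≃* FreeGroup (α ⊕ β) :=
  MonoidHom.toMulEquiv (Coprod.lift (map Sum.inl) (map Sum.inr))
    (lift (Sum.elim (inl ∘ of) (inr ∘ of))) (by ext <;> simp) (by ext (_ | _) <;> simp)

@[simp]
theorem coprodMulEquiv_inl (x : FreeGroup α) : coprodMulEquiv α β (inl x) = map Sum.inl x := by
  simp [coprodMulEquiv]

@[simp]
theorem coprodMulEquiv_inr (x : FreeGroup β) : coprodMulEquiv α β (inr x) = map Sum.inr x := by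
  simp [coprodMulEquiv]

theorem mem_range_inl_iff {x : FreeGroup α ∗ FreeGroup β} :
    x ∈ (inl : FreeGroup α →* _).range ↔ coprodMulEquiv α β x ∈ leftFactor α β := by
  constructor
  · rintro ⟨a, rfl⟩
    exact ⟨a, (coprodMulEquiv_inl a).symm⟩
  · rintro ⟨a, ha⟩
    exact ⟨a, (coprodMulEquiv α β).injective (by simpa using ha)⟩

theorem coprodMulEquiv_lift_inl (g w : FreeGroup α ∗ FreeGroup Unit) :
    coprodMulEquiv α Unit (Coprod.lift inl (lift fun _ => g) w) =
      subst (coprodMulEquiv α Unit g) (coprodMulEquiv α Unit w) := by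
  have hcomp : (coprodMulEquiv α Unit).toMonoidHom.comp (Coprod.lift inl (lift fun _ => g)) =
      (subst (coprodMulEquiv α Unit g)).comp (coprodMulEquiv α Unit).toMonoidHom := by
    ext <;> simp
  exact DFunLike.congr_fun hcomp w

end Coprod

end FreeGroup

open Monoid Monoid.Coprod

/-- If `A` is a free group of finite rank, `G = A ∗ F(z)`, `g ∈ G` does not lie in the
subgroup `A`, and `w = w(z)` is an element of `A ∗ F(z)` not in the factor `A`, then the
evaluation `w(g)` (under the substitution `z ↦ g`, identical on `A`) does not lie in the
subgroup `A`; in particular `c⁻¹ w(g) ≠ 1` for every `c` in the subgroup `A`. -/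
theorem substitution_stays_outside_base (r : ℕ)
    (g : FreeGroup (Fin r) ∗ FreeGroup Unit)
    (hg : g ∉ (Coprod.inl :
      FreeGroup (Fin r) →* FreeGroup (Fin r) ∗ FreeGroup Unit).range)
    (w : FreeGroup (Fin r) ∗ FreeGroup Unit)
    (hw : w ∉ (Coprod.inl :
      FreeGroup (Fin r) →* FreeGroup (Fin r) ∗ FreeGroup Unit).range) :
    (Coprod.lift
        (Coprod.inl : FreeGroup (Fin r) →* FreeGroup (Fin r) ∗ FreeGroup Unit)
        (FreeGroup.lift (fun _ : Unit => g)) w ∉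
      (Coprod.inl :
        FreeGroup (Fin r) →* FreeGroup (Fin r) ∗ FreeGroup Unit).range) ∧
    ∀ c ∈ (Coprod.inl :
        FreeGroup (Fin r) →* FreeGroup (Fin r) ∗ FreeGroup Unit).range,
      c⁻¹ * Coprod.lift
        (Coprod.inl : FreeGroup (Fin r) →* FreeGroup (Fin r) ∗ FreeGroup Unit)
        (FreeGroup.lift (fun _ : Unit => g)) w ≠ 1 := by
  have hφw : Coprod.lift inl (FreeGroup.lift fun _ => g) w ∉
      (inl : FreeGroup (Fin r) →* _).range := by
    rw [FreeGroup.mem_range_inl_iff, FreeGroup.coprodMulEquiv_lift_inl]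
    rw [FreeGroup.mem_range_inl_iff] at hg hw
    exact FreeGroup.subst_notMem_leftFactor hg hw
  refine ⟨hφw, fun c hc hc₁ => hφw ?_⟩
  rwa [← inv_mul_eq_one.1 hc₁]
end
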